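/- arXiv:2402.11539 — 4 statements merged into one kernel-verified Lean document; each statement's English description precedes it below -/
import Mathlib

section
/- Fundamental binary relation: for every ε ∈ Γ_N and every d ∈ ℤ, Si_d((ε);(q)) + ε^{−1}·(θ^q − θ)·Si_{d+1}((ε,1);(1,q−1)) = 0 in K_N. -/
noncomputable section

open scoped Classical

namespace ZHPC

variable (Fq : Type) [Field Fq] [Fintype Fq]

/-- `q`, the cardinality of the base finite field `𝔽_q`. -/
def qc : ℕ := Fintype.card Fq

/-- A fixed algebraic closure `𝔽̄_q` of `𝔽_q`. -/
abbrev Fb := AlgebraicClosure Fq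

/-- The field `𝔽̄_q((1/θ))` of formal Laurent series in `1/θ` over `𝔽̄_q`, modeled as the
field of formal Laurent series in one variable, `θ` being the inverse of that variable. -/
abbrev Kinf := LaurentSeries (Fb Fq)

/-- The embedding of the constants `𝔽̄_q → 𝔽̄_q((1/θ))`. -/
def cst : Fb Fq →+* Kinf Fq := HahnSeries.C

/-- The element `θ`. -/
def theta : Kinf Fq := HahnSeries.single (-1 : ℤ) 1

/-- `ℓ_d = ∏_{i=1}^{d} (θ - θ^{q^i})`, with `ℓ_0 = 1`. -/
def ell (d : ℕ) : Kinf Fq := ∏ i ∈ Finset.Icc 1 d, (theta Fq - theta Fq ^ qc Fq ^ i)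

/-- Arrays `(𝛆;𝔰)` of some depth `n`. -/
structure PArr (F : Type) where
  depth : ℕ
  s : Fin depth → ℕ
  eps : Fin depth → F

namespace PArr

variable {F : Type}

/-- A *positive array* for level `N`: all entries `sᵢ` are positive integers and all the
characters `εᵢ` are `N`-th roots of unity. -/
def Positive [Monoid F] (N : ℕ) (A : PArr F) : Prop := (∀ i, 0 < A.s i) ∧ ∀ i, A.eps i ^ N = 1

/-- The weight `w(𝔰) = s₁ + ⋯ + s_n`. -/
def wt (A : PArr F) : ℕ := ∑ i, A.s i

/-- The `i`-th entry of `𝔰` (`0`-indexed), with value `0` beyond the depth. -/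
def sAt (A : PArr F) (i : ℕ) : ℕ := if h : i < A.depth then A.s ⟨i, h⟩ else 0

/-- The partial sums `s₁ + ⋯ + s_i` (entries beyond the depth being `0`). -/
def psum (A : PArr F) (i : ℕ) : ℕ := ∑ j ∈ Finset.range i, A.sAt j

/-- The character `χ(𝛆) = ε₁ ⋯ ε_n`. -/
def chi [CommMonoid F] (A : PArr F) : F := ∏ i, A.eps i

end PArr

/-- The Carlitz multiple polylogarithm at roots of unity
`Li(𝛆;𝔰) = Σ_{d₁ > ⋯ > d_n ≥ 0} ε₁^{d₁}⋯ε_n^{d_n} / (ℓ_{d₁}^{s₁}⋯ℓ_{d_n}^{s_n})`. -/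
def Li (A : PArr (Fb Fq)) : Kinf Fq :=
  ∑' d : {f : Fin A.depth → ℕ // StrictAnti f},
    ∏ i, cst Fq (A.eps i ^ d.1 i) / ell Fq (d.1 i) ^ A.s i

/-- `Si_d(𝛆;𝔰)`: same summand as `Li`, over decreasing tuples with `d₁ = d`. -/
def Sid (d : ℤ) (A : PArr (Fb Fq)) : Kinf Fq :=
  ∑' f : {f : Fin A.depth → ℕ // StrictAnti f ∧ ∀ i : Fin A.depth, i.val = 0 → (f i : ℤ) = d},
    ∏ i, cst Fq (A.eps i ^ f.1 i) / ell Fq (f.1 i) ^ A.s i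

/-- `Si_{<d}(𝛆;𝔰)`: same summand as `Li`, over decreasing tuples with `d > d₁`. -/
def SidLt (d : ℤ) (A : PArr (Fb Fq)) : Kinf Fq :=
  ∑' f : {f : Fin A.depth → ℕ // StrictAnti f ∧ ∀ i : Fin A.depth, (f i : ℤ) < d},
    ∏ i, cst Fq (A.eps i ^ f.1 i) / ell Fq (f.1 i) ^ A.s i

/-- The value at `θ` of the monic polynomial `θ^e + Σ_{j<e} c_j θ^j ∈ A = 𝔽_q[θ]`. -/
def monicVal (e : ℕ) (c : Fin e → Fq) : Kinf Fq :=
  theta Fq ^ e + ∑ j, cst Fq (algebraMap Fq (Fb Fq) (c j)) * theta Fq ^ (j : ℕ)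

/-- The power sum `S_d(𝛆;𝔰)`, a sum over tuples of monic polynomials `a₁, …, a_n ∈ A₊`
with `d = deg a₁ > ⋯ > deg a_n ≥ 0`; a monic polynomial of degree `e` is encoded by its
tuple of lower coefficients `c : Fin e → Fq`. -/
def Sd (d : ℤ) (A : PArr (Fb Fq)) : Kinf Fq :=
  ∑' e : {f : Fin A.depth → ℕ // StrictAnti f ∧ ∀ i : Fin A.depth, i.val = 0 → (f i : ℤ) = d},
    ∑ c : (∀ i, Fin (e.1 i) → Fq),
      ∏ i, cst Fq (A.eps i ^ e.1 i) / monicVal Fq (e.1 i) (c i) ^ A.s i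

/-- The `N`-th cyclotomic multiple zeta value `ζ_A(𝛆;𝔰) = Σ_{d ≥ 0} S_d(𝛆;𝔰)`. -/
def zetaA (A : PArr (Fb Fq)) : Kinf Fq := ∑' d : ℕ, Sd Fq (d : ℤ) A

/-- The cyclotomic field `k_N = 𝔽_q(ζ_N) ⊆ 𝔽̄_q`. -/
def kN (N : ℕ) : Subfield (Fb Fq) :=
  Subfield.closure (Set.range (algebraMap Fq (Fb Fq)) ∪ {x | x ^ N = 1})

/-- The field `K_N = k_N(θ)`, as a subfield of `𝔽̄_q((1/θ))`. -/
def KNf (N : ℕ) : Subfield (Kinf Fq) :=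
  Subfield.closure ((cst Fq '' (kN Fq N : Set (Fb Fq))) ∪ {theta Fq})

/-- The ring `A_N = k_N[θ]`, as a subring of `𝔽̄_q((1/θ))`. -/
def AN (N : ℕ) : Subring (Kinf Fq) :=
  Subring.closure ((cst Fq '' (kN Fq N : Set (Fb Fq))) ∪ {theta Fq})

/-- `CZ_{N,w}`: the `K_N`-span of the `N`-th cyclotomic multiple zeta values of weight `w`. -/
def CZ (N w : ℕ) : Submodule (KNf Fq N) (Kinf Fq) :=
  Submodule.span (KNf Fq N) {x | ∃ A : PArr (Fb Fq), A.Positive N ∧ A.wt = w ∧ x = zetaA Fq A}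

/-- `CL_{N,w}`: the `K_N`-span of the CMPL's at `N`-th roots of unity of weight `w`. -/
def CL (N w : ℕ) : Submodule (KNf Fq N) (Kinf Fq) :=
  Submodule.span (KNf Fq N) {x | ∃ A : PArr (Fb Fq), A.Positive N ∧ A.wt = w ∧ x = Li Fq A}

/-- The index set of pairs `(𝔰,𝛆)` with `𝔰 ∈ S_w` and `𝛆 ∈ Γ_N^{depth 𝔰}`: positive arrays
of weight `w` with `q ∤ sᵢ` for all `i`. -/
def SwIdx (N w : ℕ) : Type :=
  {A : PArr (Fb Fq) // A.Positive N ∧ 0 < A.depth ∧ A.wt = w ∧ ∀ i, ¬ qc Fq ∣ A.s i}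

/-! For `d < 0` both sums are empty. For `d = m ≥ 0` the depth-one sum `Si_m((ε);(q))` is the
single term `ε^m / ℓ_m^q`, and the depth-two sum `Si_{m+1}((ε,1);(1,q-1))` is `ε^{m+1} / ℓ_{m+1}`
times `Σ_{j ≤ m} ℓ_j^{1-q}`. Because `x ↦ x^q` is additive in characteristic `p`,
`(θ - θ^{q^{m+1}})^q = θ^q - θ^{q^{m+2}}`, and together with `ℓ_{m+1} = ℓ_m (θ - θ^{q^{m+1}})` this
makes `(θ^q - θ) Σ_{j ≤ m} ℓ_j^{1-q}` telescope to `(θ^{q^{m+1}} - θ) / ℓ_m^{q-1} = -ℓ_{m+1} / ℓ_m^q`,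
which is the relation. -/

lemma one_lt_qc : 1 < qc Fq := Fintype.one_lt_card

lemma theta_pow_injective (F : Type) [Field F] : Function.Injective (theta F ^ · : ℕ → Kinf F) := by
  intro k j hkj
  have hsupp := congrArg HahnSeries.support hkj
  simp only [theta, HahnSeries.single_pow, one_pow,
    HahnSeries.support_single_of_ne one_ne_zero, Set.singleton_eq_singleton_iff] at hsupp
  simpa using hsupp

lemma ell_zero : ell Fq 0 = 1 := by simp [ell]

lemma ell_succ (d : ℕ) :
    ell Fq (d + 1) = ell Fq d * (theta Fq - theta Fq ^ qc Fq ^ (d + 1)) :=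
  Finset.prod_Icc_succ_top (by omega) _

lemma theta_sub_theta_pow_qc_pow_ne_zero {i : ℕ} (hi : i ≠ 0) :
    theta Fq - theta Fq ^ qc Fq ^ i ≠ 0 := by
  refine sub_ne_zero.mpr fun h => ?_
  have := theta_pow_injective Fq ((pow_one _).trans h)
  exact (Nat.one_lt_pow hi (one_lt_qc Fq)).ne this

lemma ell_ne_zero (d : ℕ) : ell Fq d ≠ 0 :=
  Finset.prod_ne_zero_iff.mpr fun i hi =>
    theta_sub_theta_pow_qc_pow_ne_zero Fq (by grind)

lemma sub_pow_qc (x y : Kinf Fq) : (x - y) ^ qc Fq = x ^ qc Fq - y ^ qc Fq :=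
  map_sub (FiniteField.frobeniusAlgHom Fq (Kinf Fq)) x y

lemma theta_pow_qc_sub_mul_sum_inv_ell_pow (m : ℕ) :
    (theta Fq ^ qc Fq - theta Fq) * ∑ j ∈ Finset.range (m + 1), (ell Fq j ^ (qc Fq - 1))⁻¹
      = (theta Fq ^ qc Fq ^ (m + 1) - theta Fq) / ell Fq m ^ (qc Fq - 1) := by
  induction m with
  | zero => simp [ell_zero]
  | succ m ih =>
    rw [Finset.sum_range_succ, mul_add, ih, ell_succ, mul_pow]
    have hℓ := ell_ne_zero Fq m
    have hD0 := theta_sub_theta_pow_qc_pow_ne_zero Fq (Nat.succ_ne_zero m)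
    set t := theta Fq
    set q := qc Fq
    set D := t - t ^ q ^ (m + 1)
    have hDq : D ^ q = t ^ q - t ^ q ^ (m + 2) := by
      rw [sub_pow_qc, ← pow_mul, ← pow_succ]
    have hD : D ^ (q - 1) * D = D ^ q := by
      rw [← pow_succ, Nat.sub_add_cancel (one_lt_qc Fq).le]
    field_simp
    linear_combination -hD - hDq

lemma le_apply_zero_add_one_of_strictAnti {n : ℕ} {f : Fin n → ℕ} (hf : StrictAnti f) (hn : 0 < n) :
    n ≤ f ⟨0, hn⟩ + 1 := by
  have hle (i : Fin n) : f i < f ⟨0, hn⟩ + 1 := Nat.lt_succ_of_le (hf.antitone (Nat.zero_le i.val))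
  simpa using Fintype.card_le_of_injective (fun i => (⟨f i, hle i⟩ : Fin (f ⟨0, hn⟩ + 1)))
    fun i j hij => hf.injective (Fin.mk.inj hij)

lemma Sid_eq_zero_of_lt_depth {d : ℤ} {A : PArr (Fb Fq)} (hA : 0 < A.depth)
    (hd : d + 1 < A.depth) :
    Sid Fq d A = 0 := by
  have : IsEmpty {f : Fin A.depth → ℕ //
      StrictAnti f ∧ ∀ i : Fin A.depth, i.val = 0 → (f i : ℤ) = d} := by
    refine ⟨fun ⟨f, hf, hf0⟩ => ?_⟩
    have hlen := le_apply_zero_add_one_of_strictAnti hf hA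
    have hf0d := hf0 ⟨0, hA⟩ rfl
    omega
  exact tsum_empty

lemma Sid_depth_one (m : ℕ) (s : Fin 1 → ℕ) (e : Fin 1 → Fb Fq) :
    Sid Fq m ⟨1, s, e⟩ = cst Fq (e 0 ^ m) / ell Fq m ^ s 0 := by
  let f₀ : {f : Fin 1 → ℕ // StrictAnti f ∧ ∀ i : Fin 1, i.val = 0 → (f i : ℤ) = m} :=
    ⟨fun _ => m, Subsingleton.strictAnti _, fun _ _ => rfl⟩
  have hf₀ (f : {f : Fin 1 → ℕ // StrictAnti f ∧ ∀ i : Fin 1, i.val = 0 → (f i : ℤ) = m}) :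
      f = f₀ := by
    ext i
    simpa [Fin.fin_one_eq_zero i] using f.2.2 0 rfl
  rw [Sid, tsum_eq_single f₀ fun f hf => (hf (hf₀ f)).elim, Fin.prod_univ_one]

def depthTwoEquiv (n : ℕ) :
    Fin n ≃ {f : Fin 2 → ℕ // StrictAnti f ∧ ∀ i : Fin 2, i.val = 0 → (f i : ℤ) = n} where
  toFun j := ⟨![n, j], by simp [j.isLt], fun i hi => by rw [show i = 0 from Fin.ext hi]; rfl⟩
  invFun f := ⟨f.1 1, by have := f.2.1 (show (0 : Fin 2) < 1 by decide); have := f.2.2 0 rfl; omega⟩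
  left_inv j := rfl
  right_inv f := by
    ext i
    fin_cases i
    · simpa using (f.2.2 0 rfl).symm
    · rfl

lemma Sid_depth_two (n : ℕ) (s : Fin 2 → ℕ) (e : Fin 2 → Fb Fq) :
    Sid Fq n ⟨2, s, e⟩
      = cst Fq (e 0 ^ n) / ell Fq n ^ s 0
          * ∑ j ∈ Finset.range n, cst Fq (e 1 ^ j) / ell Fq j ^ s 1 := by
  rw [Sid, ← (depthTwoEquiv n).tsum_eq, tsum_fintype, Finset.mul_sum,
    ← Fin.sum_univ_eq_sum_range]
  exact Finset.sum_congr rfl fun j _ => Fin.prod_univ_two _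

lemma inv_ell_pow_qc_add_div_ell_succ_mul_sum_eq_zero (m : ℕ) :
    (ell Fq m ^ qc Fq)⁻¹ + (theta Fq ^ qc Fq - theta Fq) / ell Fq (m + 1)
        * ∑ j ∈ Finset.range (m + 1), (ell Fq j ^ (qc Fq - 1))⁻¹ = 0 := by
  have hsum := theta_pow_qc_sub_mul_sum_inv_ell_pow Fq m
  have hℓ := ell_ne_zero Fq m
  have hD := theta_sub_theta_pow_qc_pow_ne_zero Fq (Nat.succ_ne_zero m)
  have hq : ell Fq m ^ qc Fq = ell Fq m ^ (qc Fq - 1) * ell Fq m := by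
    rw [← pow_succ, Nat.sub_add_cancel (one_lt_qc Fq).le]
  rw [div_mul_eq_mul_div, hsum, ell_succ, hq]
  field_simp
  ring

/-- **The fundamental binary relation** `R_ε`: for every `ε ∈ Γ_N` and every `d ∈ ℤ`,
`Si_d((ε);(q)) + ε⁻¹·(θ^q - θ)·Si_{d+1}((ε,1);(1,q-1)) = 0`. -/
theorem fundamental_binary_relation
    (Fq : Type) [Field Fq] [Fintype Fq] (N : ℕ) (hN : 0 < N)
    (ε : Fb Fq) (hε : ε ^ N = 1) (d : ℤ) :
    Sid Fq d ⟨1, fun _ => qc Fq, fun _ => ε⟩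
      + cst Fq ε⁻¹ * (theta Fq ^ qc Fq - theta Fq)
          * Sid Fq (d + 1) ⟨2, ![1, qc Fq - 1], ![ε, 1]⟩ = 0 := by
  rcases lt_or_ge d 0 with hd | hd
  · rw [Sid_eq_zero_of_lt_depth Fq one_pos (by simpa using hd),
      Sid_eq_zero_of_lt_depth Fq two_pos (by push_cast; omega)]
    ring
  lift d to ℕ using hd
  have hc : cst Fq ε ≠ 0 := (map_ne_zero _).mpr (IsUnit.of_pow_eq_one hε hN.ne').ne_zero
  rw [Sid_depth_one, ← Nat.cast_add_one, Sid_depth_two]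
  simp only [Matrix.cons_val_zero, Matrix.cons_val_one, one_pow, map_one, map_pow, map_inv₀,
    pow_one, one_div]
  set S := ∑ j ∈ Finset.range (d + 1), (ell Fq j ^ (qc Fq - 1))⁻¹
  linear_combination (cst Fq ε ^ d) * inv_ell_pow_qc_add_div_ell_succ_mul_sum_eq_zero Fq d
    + cst Fq ε ^ d * (theta Fq ^ qc Fq - theta Fq) / ell Fq (d + 1) * S * inv_mul_cancel₀ hc

end ZHPC
end
end

section
/- Let ε₁,…,ε_n ∈ Γ_N be such that ε₁^R,…,ε_n^R are pairwise distinct, and for each i let μ_i ∈ 𝔽̄_q satisfy μ_i^{q^R−1} = ε_i^R. Then μ₁,…,μ_n are linearly independent over the subfield k_N = 𝔽_{q^R} of 𝔽̄_q. -/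
noncomputable section

open scoped Classical

namespace ZHPC

variable (Fq : Type) [Field Fq] [Fintype Fq]

/-- `R = [k_N : 𝔽_q]`: the least `r ≥ 1` such that all `N`-th roots of unity lie in
`𝔽_{q^r}` (the fixed field of the `r`-th iterate of the `q`-Frobenius). -/
def Rdeg (N : ℕ) : ℕ := sInf {r | 0 < r ∧ ∀ x : Fb Fq, x ^ N = 1 → x ^ qc Fq ^ r = x}

set_option synthInstance.maxHeartbeats 1000000

/-- (Lemma 3.1 / `gamma_i`): if `ε₁, …, ε_n ∈ Γ_N` are such that the `ε_i^R` are pairwise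
distinct, and `μ_i ∈ 𝔽̄_q` satisfies `μ_i^{q^R - 1} = ε_i^R` for each `i`, then the `μ_i`
are linearly independent over `k_N = 𝔽_{q^R}`. -/
theorem roots_mu_linearly_independent_over_kN
    (Fq : Type) [Field Fq] [Fintype Fq] (N : ℕ) (hN : 0 < N)
    (n : ℕ) (ε : Fin n → Fb Fq) (hε : ∀ i, ε i ^ N = 1)
    (hdist : Function.Injective fun i => ε i ^ Rdeg Fq N)
    (μ : Fin n → Fb Fq) (hμ : ∀ i, μ i ^ (qc Fq ^ Rdeg Fq N - 1) = ε i ^ Rdeg Fq N) :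
    LinearIndependent (kN Fq N) μ := by
  classical
  -- characteristic setup
  obtain ⟨m, hp, hcard⟩ := FiniteField.card Fq (ringChar Fq)
  haveI hfp : Fact (ringChar Fq).Prime := ⟨hp⟩
  set p := ringChar Fq with hpdef
  haveI : CharP (Fb Fq) p :=
    charP_of_injective_algebraMap (algebraMap Fq (Fb Fq)).injective p
  -- the set defining Rdeg is nonempty
  have hSfin : {x : Fb Fq | x ^ N = 1}.Finite := by
    apply Set.Finite.subset (Polynomial.nthRoots N (1 : Fb Fq)).toFinset.finite_toSet
    intro x hx
    simp only [Finset.mem_coe, Multiset.mem_toFinset, Polynomial.mem_nthRoots hN]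
    exact hx
  set K : Subalgebra Fq (Fb Fq) := Algebra.adjoin Fq {x : Fb Fq | x ^ N = 1} with hK
  haveI : FiniteDimensional Fq K :=
    ⟨(Submodule.fg_top _).mpr (fg_adjoin_of_finite hSfin fun x _ =>
      Algebra.IsIntegral.isIntegral x)⟩
  haveI : Finite K := Module.finite_of_finite Fq
  haveI : Fintype K := Fintype.ofFinite K
  haveI hKnt : Nontrivial K := ⟨0, 1, fun h => by simpa using congrArg Subtype.val h⟩
  letI : Field K := (Finite.isField_of_domain K).toField
  have hqc : qc Fq = Fintype.card Fq := rfl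
  have hcardK : Fintype.card K = qc Fq ^ Module.finrank Fq K := by rw [hqc]; exact Module.card_eq_pow_finrank
  have hne : {r | 0 < r ∧ ∀ x : Fb Fq, x ^ N = 1 → x ^ qc Fq ^ r = x}.Nonempty := by
    refine ⟨Module.finrank Fq K, Module.finrank_pos, fun x hx => ?_⟩
    have hxK : x ∈ K := Algebra.subset_adjoin hx
    have := FiniteField.pow_card (⟨x, hxK⟩ : K)
    rw [hcardK] at this
    simpa using congrArg Subtype.val this
  have hmem := Nat.sInf_mem hne
  rw [show sInf {r | 0 < r ∧ ∀ x : Fb Fq, x ^ N = 1 → x ^ qc Fq ^ r = x} = Rdeg Fq N from rfl]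
    at hmem
  obtain ⟨hRpos, hRfix⟩ := hmem
  set R := Rdeg Fq N with hRdef
  set Q := qc Fq ^ R with hQdef
  have hQp : Q = p ^ ((m : ℕ) * R) := by rw [hQdef, hqc, hcard, pow_mul]
  have hq2 : 2 ≤ qc Fq := Fintype.one_lt_card
  have hQ2 : 2 ≤ Q := le_trans hq2 (Nat.le_self_pow hRpos.ne' _)
  -- the Frobenius
  set φ := iterateFrobenius (Fb Fq) p (m * R) with hφdef
  have hφ : ∀ x : Fb Fq, φ x = x ^ Q := fun x => by
    rw [hφdef, iterateFrobenius_def, hQp]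
  -- kN is fixed by φ
  have hfix : ∀ c ∈ kN Fq N, c ^ Q = c := by
    let T : Subfield (Fb Fq) :=
      { carrier := {x | φ x = x}
        mul_mem' := fun {a b} ha hb => by simp only [Set.mem_setOf_eq, map_mul] at *; rw [ha, hb]
        one_mem' := map_one φ
        add_mem' := fun {a b} ha hb => by simp only [Set.mem_setOf_eq, map_add] at *; rw [ha, hb]
        zero_mem' := map_zero φ
        neg_mem' := fun {a} ha => by simp only [Set.mem_setOf_eq, map_neg] at *; rw [ha]
        inv_mem' := fun a ha => by simp only [Set.mem_setOf_eq, map_inv₀] at *; rw [ha] }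
    have hle : kN Fq N ≤ T := by
      rw [kN, Subfield.closure_le]
      rintro x (⟨a, rfl⟩ | hx)
      · show φ _ = _
        rw [hφ, ← map_pow, hQdef]
        congr 1
        exact FiniteField.pow_card_pow R a
      · show φ _ = _
        rw [hφ]
        exact hRfix x hx
    intro c hc
    have h2 : φ c = c := hle hc
    rwa [hφ] at h2
  -- the Frobenius as a kN-linear endomorphism
  let f : Module.End (kN Fq N) (Fb Fq) :=
    { toFun := fun x => x ^ Q
      map_add' := fun a b => by
        have := map_add φ a b
        simpa only [hφ] using this
      map_smul' := fun c x => by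
        simp only [RingHom.id_apply]
        show ((c : Fb Fq) * x) ^ Q = (c : Fb Fq) * x ^ Q
        rw [mul_pow, hfix c c.2] }
  have hεne : ∀ i, ε i ^ R ≠ 0 := by
    intro i h
    have : (ε i ^ R) ^ N = 1 := by rw [← pow_mul, mul_comm, pow_mul, hε, one_pow]
    rw [h, zero_pow hN.ne'] at this
    exact zero_ne_one this
  have hεm : ∀ i, ε i ∈ kN Fq N := by
    intro i
    apply Subfield.subset_closure
    exact Or.inr (hε i)
  have hεmem : ∀ i, ε i ^ R ∈ kN Fq N := fun i => pow_mem (hεm i) R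
  refine Module.End.eigenvectors_linearIndependent' f
    (fun i => (⟨ε i ^ R, hεmem i⟩ : kN Fq N)) ?_ μ ?_
  · intro i j h
    exact hdist (congrArg Subtype.val h)
  · intro i
    constructor
    · rw [Module.End.mem_eigenspace_iff]
      show μ i ^ Q = (ε i ^ R) * μ i
      calc μ i ^ Q = μ i ^ (Q - 1) * μ i := by
            rw [← pow_succ, Nat.sub_add_cancel (le_trans one_le_two hQ2)]
        _ = (ε i ^ R) * μ i := by rw [hμ i]
    · intro h
      apply hεne i
      rw [← hμ i, h, zero_pow]
      omega


end ZHPC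
end
end

section
/- Grouping a relation by character: let (𝛆_i;𝔰_i), i = 1,…,m, be pairwise distinct positive arrays with 𝔰_i ∈ S_w for a fixed weight w, and let a_i ∈ K_N satisfy Σ_{i=1}^m a_i·μ(𝛆_i)·Li(𝛆_i;𝔰_i) = 0 in 𝔽̄_q((1/θ)). Then for every ε ∈ Γ_N one has Σ_{i : χ(𝛆_i)^R = ε^R} a_i·μ(𝛆_i)·Li(𝛆_i;𝔰_i) = 0. -/
/-!
Let `σ` be the `q^R`-power Frobenius of `𝔽̄_q`, applied coefficientwise to `𝔽̄_q((1/θ))`. It is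
a continuous ring endomorphism fixing `θ`, `k_N` and the `N`-th roots of unity, hence `K_N` and
every `Li(𝛆;𝔰)`, while `σ(μ(𝛆)) = χ(𝛆)^R μ(𝛆)`. So each term `x_i` of the relation is an
eigenvector, `σ x_i = χ(𝛆_i)^R x_i`, with eigenvalue fixed by Frobenius. Applying `σ` repeatedly
gives `Σ_i χ(𝛆_i)^{Rk} x_i = 0` for all `k`, and evaluating a polynomial that vanishes at every
`χ(𝛆_i)^R ≠ ε^R` but not at `ε^R` isolates the subsum.
-/

noncomputable section

open scoped Classical

open Polynomial in
theorem Finset.sum_filter_eq_zero_of_forall_sum_pow_smul_eq_zero {ι F M : Type*} [Field F]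
    [AddCommGroup M] [Module F M] (s : Finset ι) (c : ι → F) (x : ι → M)
    (h : ∀ k : ℕ, ∑ i ∈ s, c i ^ k • x i = 0) (y : F) :
    ∑ i ∈ s with c i = y, x i = 0 := by
  have heval : ∀ P : F[X], ∑ i ∈ s, P.eval (c i) • x i = 0 := by
    intro P
    induction P using Polynomial.induction_on' with
    | add P Q hP hQ => simp only [eval_add, add_smul, sum_add_distrib, hP, hQ, add_zero]
    | monomial k a => simp only [eval_monomial, mul_smul, ← smul_sum, h k, smul_zero]
  set P : F[X] := ∏ z ∈ (s.image c).erase y, (X - C z)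
  have hPy : P.eval y ≠ 0 := by
    simp only [P, eval_prod, eval_sub, eval_X, eval_C, prod_ne_zero_iff, sub_ne_zero]
    exact fun z hz => (ne_of_mem_erase hz).symm
  have hPc : ∀ i ∈ s, P.eval (c i) • x i = if c i = y then P.eval y • x i else 0 := by
    intro i hi
    split_ifs with hci
    · rw [hci]
    · rw [eval_prod, prod_eq_zero (mem_erase.2 ⟨hci, mem_image_of_mem c hi⟩) (by simp), zero_smul]
  have := heval P
  rw [sum_congr rfl hPc, ← sum_filter, ← smul_sum] at this
  exact (smul_eq_zero.1 this).resolve_left hPy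

theorem LinearMap.sum_pow_smul_eq_zero_of_apply_eq_smul {ι F M : Type*} [Field F]
    [AddCommGroup M] [Module F M] {φ : F →+* F} (σ : M →ₛₗ[φ] M) (s : Finset ι)
    (c : ι → F) (x : ι → M) (hc : ∀ i ∈ s, φ (c i) = c i) (hx : ∀ i ∈ s, σ (x i) = c i • x i)
    (hsum : ∑ i ∈ s, x i = 0) (k : ℕ) : ∑ i ∈ s, c i ^ k • x i = 0 := by
  induction k with
  | zero => simpa using hsum
  | succ k ih =>
    calc ∑ i ∈ s, c i ^ (k + 1) • x i = σ (∑ i ∈ s, c i ^ k • x i) := by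
          rw [map_sum]
          refine Finset.sum_congr rfl fun i hi => ?_
          rw [map_smulₛₗ, map_pow, hc i hi, hx i hi, smul_smul, pow_succ]
      _ = 0 := by rw [ih, map_zero]

theorem LinearMap.sum_filter_eq_zero_of_apply_eq_smul {ι F M : Type*} [Field F]
    [AddCommGroup M] [Module F M] {φ : F →+* F} (σ : M →ₛₗ[φ] M) (s : Finset ι)
    (c : ι → F) (x : ι → M) (hc : ∀ i ∈ s, φ (c i) = c i) (hx : ∀ i ∈ s, σ (x i) = c i • x i)
    (hsum : ∑ i ∈ s, x i = 0) (y : F) : ∑ i ∈ s with c i = y, x i = 0 :=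
  s.sum_filter_eq_zero_of_forall_sum_pow_smul_eq_zero c x
    (σ.sum_pow_smul_eq_zero_of_apply_eq_smul s c x hc hx hsum) y

theorem map_tsum_of_forall_map_eq_self {ι α G : Type*} [AddCommMonoid α] [TopologicalSpace α]
    [T2Space α] [FunLike G α α] [AddMonoidHomClass G α α] {g : G} (hg : Continuous g)
    {f : ι → α} (hf : ∀ i, g (f i) = f i) : g (∑' i, f i) = ∑' i, f i := by
  by_cases h : Summable f
  · rw [h.map_tsum g hg]
    exact tsum_congr hf
  · rw [tsum_eq_zero_of_not_summable h, map_zero]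

namespace HahnSeries

variable {Γ R S : Type*} [PartialOrder Γ] [Semiring R] [Semiring S]

def mapSemilinear (f : R →+* S) : HahnSeries Γ R →ₛₗ[f] HahnSeries Γ S where
  toFun x := x.map f
  map_add' _ _ := HahnSeries.map_add (f : R →+ S)
  map_smul' r x := by ext; simp

variable [AddCommMonoid Γ] [IsOrderedCancelAddMonoid Γ]

def mapRingHom (f : R →+* S) : HahnSeries Γ R →+* HahnSeries Γ S where
  toFun x := x.map f
  map_one' := HahnSeries.map_one f.toMonoidWithZeroHom
  map_mul' _ _ := HahnSeries.map_mul (f : R →ₙ+* S)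
  map_zero' := HahnSeries.map_zero (f : ZeroHom R S)
  map_add' _ _ := HahnSeries.map_add (f : R →+ S)

@[simp]
theorem mapRingHom_apply (f : R →+* S) (x : HahnSeries Γ R) : mapRingHom f x = x.map f := rfl

end HahnSeries

namespace LaurentSeries

variable {K L : Type*} [Field K] [Field L]

theorem valuation_mapRingHom_le (f : K →+* L) (x : LaurentSeries K) :
    Valued.v (HahnSeries.mapRingHom f x) ≤ Valued.v x := by
  rcases eq_or_ne (Valued.v x) 0 with hx | hx
  · simp only [(Valuation.zero_iff _).1 hx, map_zero, le_refl]
  · rw [valuation_le_iff_coeff_lt_log_eq_zero _ hx]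
    intro n hn
    simp [(valuation_le_iff_coeff_lt_log_eq_zero K hx).1 le_rfl n hn]

theorem continuous_mapRingHom (f : K →+* K) :
    Continuous (HahnSeries.mapRingHom f : LaurentSeries K →+* LaurentSeries K) := by
  apply continuous_of_continuousAt_zero (HahnSeries.mapRingHom f)
  rw [ContinuousAt, map_zero, (Valued.hasBasis_nhds_zero _ _).tendsto_iff
    (Valued.hasBasis_nhds_zero _ _)]
  exact fun γ _ => ⟨γ, trivial, fun x hx =>
    ((Valuation.restrict_le_iff _).2 (valuation_mapRingHom_le f x)).trans_lt hx⟩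

end LaurentSeries

namespace ZHPC

variable (Fq : Type) [Field Fq] [Fintype Fq]

-- If no `r` qualifies, then `Rdeg Fq N = sInf ∅ = 0` and the claim is trivial.
theorem pow_qc_pow_Rdeg_of_pow_eq_one (N : ℕ) {x : Fb Fq} (hx : x ^ N = 1) :
    x ^ qc Fq ^ Rdeg Fq N = x := by
  by_cases h : {r | 0 < r ∧ ∀ x : Fb Fq, x ^ N = 1 → x ^ qc Fq ^ r = x}.Nonempty
  · exact (Nat.sInf_mem h).2 x hx
  · rw [Set.not_nonempty_iff_eq_empty] at h
    simp [Rdeg, h]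

def frobR (N : ℕ) : Fb Fq →ₐ[Fq] Fb Fq := FiniteField.frobeniusAlgHom Fq (Fb Fq) ^ Rdeg Fq N

theorem frobR_apply (N : ℕ) (x : Fb Fq) : frobR Fq N x = x ^ qc Fq ^ Rdeg Fq N := by
  rw [frobR, AlgHom.coe_pow, FiniteField.coe_frobeniusAlgHom, pow_iterate, qc]

theorem frobR_of_pow_eq_one (N : ℕ) {x : Fb Fq} (hx : x ^ N = 1) : frobR Fq N x = x := by
  rw [frobR_apply, pow_qc_pow_Rdeg_of_pow_eq_one Fq N hx]

theorem kN_le_eqLocusField (N : ℕ) :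
    kN Fq N ≤ (frobR Fq N : Fb Fq →+* Fb Fq).eqLocusField (RingHom.id _) := by
  refine Subfield.closure_le.2 (Set.union_subset ?_ fun x hx => frobR_of_pow_eq_one Fq N hx)
  rintro _ ⟨c, rfl⟩
  exact (frobR Fq N).commutes c

def sigma (N : ℕ) : Kinf Fq →+* Kinf Fq := HahnSeries.mapRingHom (frobR Fq N : Fb Fq →+* Fb Fq)

theorem sigma_cst (N : ℕ) (y : Fb Fq) : sigma Fq N (cst Fq y) = cst Fq (frobR Fq N y) :=
  HahnSeries.map_C y _

theorem sigma_theta (N : ℕ) : sigma Fq N (theta Fq) = theta Fq := by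
  ext n
  simp only [sigma, theta, HahnSeries.mapRingHom_apply, HahnSeries.map_coeff,
    HahnSeries.coeff_single]
  split_ifs <;> simp

theorem sigma_ell (N d : ℕ) : sigma Fq N (ell Fq d) = ell Fq d := by
  simp only [ell, map_prod, map_sub, map_pow, sigma_theta]

theorem KNf_le_eqLocusField (N : ℕ) : KNf Fq N ≤ (sigma Fq N).eqLocusField (RingHom.id _) := by
  refine Subfield.closure_le.2 (Set.union_subset ?_ ?_)
  · rintro _ ⟨y, hy, rfl⟩
    exact (sigma_cst Fq N y).trans (congrArg _ (kN_le_eqLocusField Fq N hy))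
  · rintro _ rfl
    exact sigma_theta Fq N

theorem sigma_Li (N : ℕ) (A : PArr (Fb Fq)) (hA : ∀ i, A.eps i ^ N = 1) :
    sigma Fq N (Li Fq A) = Li Fq A :=
  map_tsum_of_forall_map_eq_self (g := sigma Fq N) (LaurentSeries.continuous_mapRingHom _) fun d => by
    simp only [map_prod, map_div₀, map_pow, sigma_cst, sigma_ell, frobR_of_pow_eq_one Fq N (hA _)]

theorem PArr.chi_pow_eq_one {F : Type} [CommMonoid F] {N : ℕ} (A : PArr F)
    (hA : ∀ i, A.eps i ^ N = 1) : A.chi ^ N = 1 := by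
  rw [PArr.chi, ← Finset.prod_pow]
  exact Finset.prod_eq_one fun i _ => hA i

theorem frobR_mu (N : ℕ) (μ : Fb Fq → Fb Fq)
    (hμ : ∀ x : Fb Fq, x ^ N = 1 → μ x ^ (qc Fq ^ Rdeg Fq N - 1) = x ^ Rdeg Fq N)
    {x : Fb Fq} (hx : x ^ N = 1) : frobR Fq N (μ x) = x ^ Rdeg Fq N * μ x := by
  have hq : qc Fq ^ Rdeg Fq N = qc Fq ^ Rdeg Fq N - 1 + 1 :=
    (Nat.sub_add_cancel (Nat.one_le_pow _ _ Fintype.card_pos)).symm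
  rw [frobR_apply, hq, pow_succ, hμ x hx]

theorem sigma_mul_cst_prod_mu_mul_Li (N : ℕ) (μ : Fb Fq → Fb Fq)
    (hμ : ∀ x : Fb Fq, x ^ N = 1 → μ x ^ (qc Fq ^ Rdeg Fq N - 1) = x ^ Rdeg Fq N)
    (A : PArr (Fb Fq)) (hA : ∀ i, A.eps i ^ N = 1) {a : Kinf Fq} (ha : a ∈ KNf Fq N) :
    sigma Fq N (a * cst Fq (∏ j, μ (A.eps j)) * Li Fq A) =
      A.chi ^ Rdeg Fq N • (a * cst Fq (∏ j, μ (A.eps j)) * Li Fq A) := by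
  have hμprod : frobR Fq N (∏ j, μ (A.eps j)) = A.chi ^ Rdeg Fq N * ∏ j, μ (A.eps j) := by
    simp only [map_prod, frobR_mu Fq N μ hμ (hA _), Finset.prod_mul_distrib, Finset.prod_pow,
      PArr.chi]
  rw [map_mul, map_mul, KNf_le_eqLocusField Fq N ha, sigma_cst, hμprod, sigma_Li Fq N A hA,
    ← HahnSeries.C_mul_eq_smul, map_mul]
  simp only [cst, RingHom.id_apply]
  ring

theorem grouping_relation_by_character_general
    (Fq : Type) [Field Fq] [Fintype Fq] (N : ℕ)
    (μ : Fb Fq → Fb Fq)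
    (hμ : ∀ x : Fb Fq, x ^ N = 1 → μ x ^ (qc Fq ^ Rdeg Fq N - 1) = x ^ Rdeg Fq N)
    (m : ℕ) (A : Fin m → PArr (Fb Fq))
    (hpos : ∀ i, (A i).Positive N)
    (a : Fin m → Kinf Fq) (ha : ∀ i, a i ∈ KNf Fq N)
    (hrel : ∑ i, a i * cst Fq (∏ j, μ ((A i).eps j)) * Li Fq (A i) = 0) :
    ∀ ε : Fb Fq, ε ^ N = 1 →
      ∑ i ∈ Finset.univ.filter
          (fun i => ((A i).chi) ^ Rdeg Fq N = ε ^ Rdeg Fq N),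
        a i * cst Fq (∏ j, μ ((A i).eps j)) * Li Fq (A i) = 0 := by
  intro ε _
  have hchi : ∀ i, ((A i).chi ^ Rdeg Fq N) ^ N = 1 := fun i => by
    rw [pow_right_comm, (A i).chi_pow_eq_one (hpos i).2, one_pow]
  -- `mapSemilinear` and `sigma` are the same coefficientwise map, bundled differently.
  exact LinearMap.sum_filter_eq_zero_of_apply_eq_smul
    (HahnSeries.mapSemilinear (frobR Fq N : Fb Fq →+* Fb Fq)) Finset.univ _ _
    (fun i _ => frobR_of_pow_eq_one Fq N (hchi i))
    (fun i _ => sigma_mul_cst_prod_mu_mul_Li Fq N μ hμ (A i) (hpos i).2 (ha i)) hrel _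

/-- **Grouping a relation by character** (Lemma `same character`): if pairwise distinct
positive arrays `(𝛆_i;𝔰_i)` with `𝔰_i ∈ S_w` and coefficients `a_i ∈ K_N` satisfy
`Σ_i a_i·μ(𝛆_i)·Li(𝛆_i;𝔰_i) = 0`, then for every `ε ∈ Γ_N` the subsum over the indices
`i` with `χ(𝛆_i)^R = ε^R` also vanishes. -/
theorem grouping_relation_by_character
    (Fq : Type) [Field Fq] [Fintype Fq] (N w : ℕ) (hN : 0 < N) (hw : 0 < w)
    (μ : Fb Fq → Fb Fq)
    (hμ : ∀ x : Fb Fq, x ^ N = 1 → μ x ^ (qc Fq ^ Rdeg Fq N - 1) = x ^ Rdeg Fq N)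
    (m : ℕ) (A : Fin m → PArr (Fb Fq))
    (hpos : ∀ i, (A i).Positive N)
    (hSw : ∀ i, 0 < (A i).depth ∧ (A i).wt = w ∧ ∀ j, ¬ qc Fq ∣ (A i).s j)
    (hinj : Function.Injective A)
    (a : Fin m → Kinf Fq) (ha : ∀ i, a i ∈ KNf Fq N)
    (hrel : ∑ i, a i * cst Fq (∏ j, μ ((A i).eps j)) * Li Fq (A i) = 0) :
    ∀ ε : Fb Fq, ε ^ N = 1 →
      ∑ i ∈ Finset.univ.filter
          (fun i => ((A i).chi) ^ Rdeg Fq N = ε ^ Rdeg Fq N),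
        a i * cst Fq (∏ j, μ ((A i).eps j)) * Li Fq (A i) = 0 :=
  grouping_relation_by_character_general Fq N μ hμ m A hpos a ha hrel

end ZHPC
end
end

section
/- Counting the basis elements: for every N ∈ ℕ and every w ≥ 1, Σ_{𝔰 ∈ S_w} γ_N^{depth(𝔰)} = d_N(w); that is, the number of pairs (𝔰,𝛆) with 𝔰 ∈ S_w and 𝛆 ∈ Γ_N^{depth(𝔰)} equals d_N(w). -/
/-!
Read an array `(𝛆; 𝔰)` as the word of its entries `(sᵢ, εᵢ)`, each letter weighted by `sᵢ`,
over the alphabet of pairs with `sᵢ > 0`, `q ∤ sᵢ` and `εᵢ ∈ Γ_N`. Removing the first letter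
shows that the number `c(w)` of words of weight `w` satisfies `c(0) = 1` and
`c(w) = γ_N · Σ_{1 ≤ s ≤ w, q ∤ s} c(w - s)`. The sequence `d_N` obeys the same recurrence:
for `w < q` nothing is excluded and the partial sums of `d_N` are the powers of `γ_N + 1`; for
`w = q` only `s = q` is excluded; for `w > q` the terms with `s > q` reproduce the recurrence
at `w - q`, since `q ∣ s ↔ q ∣ s - q`.
-/

noncomputable section

open scoped Classical

namespace ZHPC

variable (Fq : Type) [Field Fq] [Fintype Fq]

/-- `γ_N = |Γ_N|`, the number of `N`-th roots of unity in `𝔽̄_q`. -/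
def gammaN (N : ℕ) : ℕ := Nat.card {x : Fb Fq // x ^ N = 1}

/-- The sequence `d_N(w)` (depending on `γ = γ_N` and `Q = q`): `d_N(0) = 1`,
`d_N(w) = γ(γ+1)^{w-1}` for `1 ≤ w < q`, `d_N(q) = γ((γ+1)^{q-1} - 1)`, and
`d_N(w) = γ·Σ_{i=1}^{q-1} d_N(w-i) + d_N(w-q)` for `w > q`. -/
def dN (γ Q : ℕ) : ℕ → ℕ
  | 0 => 1
  | (w + 1) =>
    if w + 1 < Q then γ * (γ + 1) ^ w
    else if w + 1 = Q then γ * ((γ + 1) ^ (Q - 1) - 1)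
    else γ * (∑ j ∈ Finset.range (Q - 1), dN γ Q (w - j)) + dN γ Q (w - (Q - 1))
  termination_by w => w
  decreasing_by all_goals omega

open Finset

section FilteredSum

variable {M : Type*} [AddCommMonoid M] (g : ℕ → M) {Q : ℕ}

theorem sum_Icc_filter_not_dvd_of_lt {w : ℕ} (h : w < Q) :
    ∑ s ∈ Icc 1 w with ¬ Q ∣ s, g (w - s) = ∑ u ∈ range w, g u := by
  rw [filter_true_of_mem fun s hs => Nat.not_dvd_of_pos_of_lt (by grind) (by grind),
    ← Ico_add_one_right_eq_Icc, sum_Ico_reflect _ _ le_rfl, Nat.sub_self, Nat.add_sub_cancel,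
    range_eq_Ico]

theorem sum_Icc_filter_not_dvd_add_self (hQ : 0 < Q) (m : ℕ) :
    ∑ s ∈ Icc 1 (m + Q) with ¬ Q ∣ s, g (m + Q - s) =
      ∑ s ∈ Ico 1 Q, g (m + Q - s) + ∑ s ∈ Icc 1 m with ¬ Q ∣ s, g (m - s) := by
  simp only [sum_filter, ← Ico_add_one_right_eq_Icc]
  rw [← sum_Ico_consecutive _ (by omega : 1 ≤ Q + 1) (by omega : Q + 1 ≤ m + Q + 1),
    sum_Ico_succ_top hQ, if_neg (not_not.mpr dvd_rfl), add_zero]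
  congr 1
  · refine sum_congr rfl fun s hs => if_pos ?_
    exact Nat.not_dvd_of_pos_of_lt (by grind) (by grind)
  · rw [show Q + 1 = 1 + Q by omega, show m + Q + 1 = m + 1 + Q by omega, ← sum_Ico_add']
    simp only [Nat.dvd_add_self_right, Nat.add_sub_add_right]

end FilteredSum

section Recurrence

variable {γ Q : ℕ}

theorem dN_zero : dN γ Q 0 = 1 := by
  rw [dN]

theorem dN_succ_of_lt {w : ℕ} (h : w + 1 < Q) : dN γ Q (w + 1) = γ * (γ + 1) ^ w := by
  rw [dN, if_pos h]

theorem dN_self (hQ : 0 < Q) : dN γ Q Q = γ * ((γ + 1) ^ (Q - 1) - 1) := by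
  obtain ⟨m, rfl⟩ := Nat.exists_eq_add_one_of_ne_zero hQ.ne'
  rw [dN, if_neg (lt_irrefl _), if_pos rfl]

theorem dN_add_self (hQ : 0 < Q) {m : ℕ} (hm : 0 < m) :
    dN γ Q (m + Q) = γ * ∑ s ∈ Ico 1 Q, dN γ Q (m + Q - s) + dN γ Q m := by
  obtain ⟨w, hw⟩ := Nat.exists_eq_add_one_of_ne_zero (by omega : m + Q ≠ 0)
  rw [hw, dN, if_neg (by omega), if_neg (by omega), sum_Ico_eq_sum_range,
    show w - (Q - 1) = m by omega]
  congr 2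
  refine sum_congr rfl fun j _ => ?_
  congr 1
  omega

theorem sum_range_dN_of_lt {w : ℕ} (h : w < Q) :
    ∑ u ∈ range (w + 1), dN γ Q u = (γ + 1) ^ w := by
  induction w with
  | zero => simp [dN_zero]
  | succ w ih =>
    rw [sum_range_succ, ih (by omega), dN_succ_of_lt h]
    ring

theorem dN_eq_mul_sum (hQ : 0 < Q) {w : ℕ} (hw : 0 < w) :
    dN γ Q w = γ * ∑ s ∈ Icc 1 w with ¬ Q ∣ s, dN γ Q (w - s) := by
  induction w using Nat.strong_induction_on with
  | _ w ih =>
  rcases lt_trichotomy w Q with hlt | rfl | hgt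
  · obtain ⟨v, rfl⟩ := Nat.exists_eq_add_one_of_ne_zero hw.ne'
    rw [sum_Icc_filter_not_dvd_of_lt _ hlt, sum_range_dN_of_lt (by omega),
      dN_succ_of_lt hlt]
  · have hsum : ∑ s ∈ Icc 1 w with ¬ w ∣ s, dN γ w (w - s) = ∑ u ∈ Ico 1 w, dN γ w u := by
      simpa [sum_Ico_reflect _ _ (Nat.le_succ w)] using
        sum_Icc_filter_not_dvd_add_self (dN γ w) hQ 0
    have hrange := sum_range_dN_of_lt (γ := γ) (Nat.sub_one_lt hQ.ne')
    rw [Nat.sub_add_cancel hQ, sum_range_eq_add_Ico _ hQ, dN_zero] at hrange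
    rw [dN_self hQ, hsum]
    congr 1
    omega
  · obtain ⟨m, rfl⟩ : ∃ m, w = m + Q := ⟨w - Q, by omega⟩
    rw [sum_Icc_filter_not_dvd_add_self _ hQ, mul_add, ← ih m (by omega) (by omega),
      dN_add_self hQ (by omega)]

theorem eq_dN_of_recurrence (hQ : 0 < Q) {c : ℕ → ℕ} (h0 : c 0 = 1)
    (hc : ∀ w, 0 < w → c w = γ * ∑ s ∈ Icc 1 w with ¬ Q ∣ s, c (w - s)) (w : ℕ) :
    c w = dN γ Q w := by
  induction w using Nat.strong_induction_on with
  | _ w ih =>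
  rcases Nat.eq_zero_or_pos w with rfl | hw
  · rw [h0, dN_zero]
  · rw [hc w hw, dN_eq_mul_sum hQ hw]
    congr 1
    refine sum_congr rfl fun s hs => ih _ ?_
    grind

end Recurrence

section Word

variable {α : Type*} (P : α → Prop) (f : α → ℕ)

def Word (w : ℕ) : Type _ := {l : List α // (∀ a ∈ l, P a) ∧ (l.map f).sum = w}

variable {P f}

theorem Word.card_zero (hf : ∀ a, P a → 0 < f a) : Nat.card (Word P f 0) = 1 := by
  refine Nat.card_eq_one_iff_exists.mpr ⟨⟨[], by simp⟩, fun ⟨l, hl, hsum⟩ => ?_⟩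
  obtain rfl : l = [] := by
    rcases l with _ | ⟨a, l⟩
    · rfl
    · have := hf a (hl a List.mem_cons_self)
      rw [List.map_cons, List.sum_cons] at hsum
      omega
  rfl

def Word.consEquiv (hf : ∀ a, P a → 0 < f a) {w : ℕ} (hw : 0 < w) :
    Word P f w ≃ Σ s : Icc 1 w, {a // P a ∧ f a = s} × Word P f (w - s) where
  toFun
    | ⟨[], h⟩ => absurd h.2 (by rw [List.map_nil, List.sum_nil]; omega)
    | ⟨a :: l, h⟩ =>
      ⟨⟨f a, by grind⟩, ⟨a, h.1 a List.mem_cons_self, rfl⟩,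
        ⟨l, fun b hb => h.1 b (List.mem_cons_of_mem a hb), by grind⟩⟩
  invFun x := ⟨x.2.1.1 :: x.2.2.1, by grind, by grind⟩
  left_inv := by
    rintro ⟨_ | ⟨a, l⟩, h⟩
    · exact absurd h.2 (by rw [List.map_nil, List.sum_nil]; omega)
    · rfl
  right_inv := by
    rintro ⟨⟨s, hs⟩, ⟨a, ha⟩, l⟩
    obtain rfl : s = f a := ha.2.symm
    rfl

theorem Word.finite (hf : ∀ a, P a → 0 < f a) [∀ s, Finite {a // P a ∧ f a = s}] (w : ℕ) :
    Finite (Word P f w) := by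
  induction w using Nat.strong_induction_on with
  | _ w ih =>
  rcases Nat.eq_zero_or_pos w with rfl | hw
  · exact Nat.finite_of_card_ne_zero (by rw [Word.card_zero hf]; exact one_ne_zero)
  · have (s : Icc 1 w) : Finite (Word P f (w - s)) := ih _ (by grind)
    exact .of_equiv _ (Word.consEquiv hf hw).symm

theorem Word.card_eq_sum (hf : ∀ a, P a → 0 < f a) [∀ s, Finite {a // P a ∧ f a = s}] {w : ℕ}
    (hw : 0 < w) : Nat.card (Word P f w) =
      ∑ s ∈ Icc 1 w, Nat.card {a // P a ∧ f a = s} * Nat.card (Word P f (w - s)) := by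
  have := Word.finite hf
  rw [Nat.card_congr (Word.consEquiv hf hw), Nat.card_sigma]
  simp only [Nat.card_prod]
  exact sum_coe_sort (Icc 1 w) fun s =>
    Nat.card {a // P a ∧ f a = s} * Nat.card (Word P f (w - s))

end Word

section Entries

variable {F : Type*}

def IsEntry [Monoid F] (q N : ℕ) (p : ℕ × F) : Prop := (0 < p.1 ∧ ¬ q ∣ p.1) ∧ p.2 ^ N = 1

theorem card_isEntry_fiber [Monoid F] {q N s : ℕ} (hs : 0 < s) :
    Nat.card {p : ℕ × F // IsEntry q N p ∧ p.1 = s} =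
      if q ∣ s then 0 else Nat.card {x : F // x ^ N = 1} := by
  split_ifs with hqs
  · have : IsEmpty {p : ℕ × F // IsEntry q N p ∧ p.1 = s} :=
      ⟨fun ⟨p, ⟨⟨_, hq⟩, _⟩, hp⟩ => hq (hp ▸ hqs)⟩
    exact Nat.card_of_isEmpty
  · exact Nat.card_congr
      { toFun p := ⟨p.1.2, p.2.1.2⟩
        invFun x := ⟨(s, x.1), ⟨⟨hs, hqs⟩, x.2⟩, rfl⟩
        left_inv := by rintro ⟨⟨_, x⟩, hp, rfl⟩; rfl
        right_inv _ := rfl }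

variable [CommRing F] [IsDomain F] {q N : ℕ}

theorem finite_isEntry_fiber (hN : 0 < N) (s : ℕ) :
    Finite {p : ℕ × F // IsEntry q N p ∧ p.1 = s} := by
  have : Finite {x : F // x ^ N = 1} := Set.Finite.to_subtype <|
    (Polynomial.nthRootsFinset N (1 : F)).finite_toSet.subset
      fun x hx => (Polynomial.mem_nthRootsFinset hN 1).mpr hx
  refine .of_injective (fun p => (⟨p.1.2, p.2.1.2⟩ : {x : F // x ^ N = 1})) ?_
  intro p p' hpp'
  exact Subtype.ext (Prod.ext (p.2.2.trans p'.2.2.symm) (congrArg Subtype.val hpp'))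

theorem card_word_isEntry (hq : 0 < q) (hN : 0 < N) (w : ℕ) :
    Nat.card (Word (IsEntry (F := F) q N) Prod.fst w) =
      dN (Nat.card {x : F // x ^ N = 1}) q w := by
  have := finite_isEntry_fiber (F := F) (q := q) hN
  have hpos (p : ℕ × F) (hp : IsEntry q N p) : 0 < p.1 := hp.1.1
  refine eq_dN_of_recurrence (c := fun w => Nat.card (Word (IsEntry (F := F) q N) Prod.fst w))
    hq (Word.card_zero hpos) (fun w hw => ?_) w
  rw [Word.card_eq_sum hpos hw, sum_filter, mul_sum]
  refine sum_congr rfl fun s hs => ?_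
  rw [card_isEntry_fiber (by grind)]
  split_ifs <;> simp

end Entries

def PArr.equivList (F : Type) : PArr F ≃ List (ℕ × F) :=
  (show PArr F ≃ Σ n, Fin n → ℕ × F from
    { toFun A := ⟨A.depth, fun i => (A.s i, A.eps i)⟩
      invFun x := ⟨x.1, fun i => (x.2 i).1, fun i => (x.2 i).2⟩
      left_inv _ := rfl
      right_inv _ := rfl }).trans List.equivSigmaTuple.symm

theorem PArr.equivList_apply {F : Type} (A : PArr F) :
    PArr.equivList F A = List.ofFn fun i => (A.s i, A.eps i) := rfl

def PArr.equivWord {F : Type} [Monoid F] {q N w : ℕ} (hw : 0 < w) :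
    {A : PArr F // A.Positive N ∧ 0 < A.depth ∧ A.wt = w ∧ ∀ i, ¬ q ∣ A.s i} ≃
      Word (IsEntry (F := F) q N) Prod.fst w :=
  (PArr.equivList F).subtypeEquiv fun A => by
    simp only [PArr.equivList_apply, List.forall_mem_ofFn_iff, List.map_ofFn, List.sum_ofFn,
      Function.comp_def, IsEntry, PArr.Positive, PArr.wt]
    constructor
    · rintro ⟨⟨hpos, heps⟩, -, hwt, hq⟩
      exact ⟨fun i => ⟨⟨hpos i, hq i⟩, heps i⟩, hwt⟩
    · rintro ⟨h, hwt⟩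
      obtain ⟨i, -, -⟩ := exists_ne_zero_of_sum_ne_zero (hwt ▸ hw.ne')
      exact ⟨⟨fun i => (h i).1.1, fun i => (h i).2⟩, i.pos, hwt, fun i => (h i).1.2⟩

/-- **Counting the basis elements**: for every `N ∈ ℕ` and `w ≥ 1`, the number of pairs
`(𝔰,𝛆)` with `𝔰 ∈ S_w` and `𝛆 ∈ Γ_N^{depth 𝔰}` — equivalently
`Σ_{𝔰 ∈ S_w} γ_N^{depth 𝔰}` — equals `d_N(w)`. -/
theorem counting_basis_elements
    (Fq : Type) [Field Fq] [Fintype Fq] (N w : ℕ) (hN : 0 < N) (hw : 1 ≤ w) :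
    Nat.card (SwIdx Fq N w) = dN (gammaN Fq N) (qc Fq) w :=
  (Nat.card_congr (PArr.equivWord hw)).trans (card_word_isEntry Fintype.card_pos hN w)

end ZHPC
end
end
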